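/- Consider the graph H with vertices v₀, v₁, v₂, v₃, v and edges v₀v₁, v₁v₂, v₂v₃, v₁v, v₂v, together with a list assignment L where |L(v₁v₂)| ≥ 4, |L(v₁v)|, |L(v₂v)| ≥ 3, and |L(v₀v₁)|, |L(v₂v₃)| ≥ 2. Then H has a proper edge colouring from the lists. -/

import Mathlib

/-- A proper edge colouring of `G` from the lists `L`: every edge of `G` receives a colour
from its list, and edges sharing a vertex receive distinct colours. -/
def IsListEdgeColoring {V : Type*} (G : SimpleGraph V) (L : Sym2 V → Finset ℕ)
    (C : Sym2 V → ℕ) : Prop :=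
  (∀ e ∈ G.edgeSet, C e ∈ L e) ∧
  ∀ e ∈ G.edgeSet, ∀ f ∈ G.edgeSet, e ≠ f → (∃ v, v ∈ e ∧ v ∈ f) → C e ≠ C f

/-- The graph with vertices `v₀ = 0, v₁ = 1, v₂ = 2, v₃ = 3, v = 4` and edges
`v₀v₁, v₁v₂, v₂v₃, v₁v, v₂v`: a triangle `v₁v₂v` with pendant edges at `v₁` and `v₂`. -/
def configGraphHalin : SimpleGraph (Fin 5) :=
  SimpleGraph.fromEdgeSet {s(0, 1), s(1, 2), s(2, 3), s(1, 4), s(2, 4)}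

/-!
Colour greedily, leaving `v₀v₁` for last: first reserve two colours `A ⊆ L(v₀v₁)` and give
`v₁v` a colour outside `A`, then colour `v₂v`, `v₂v₃` and `v₁v₂` in turn, each list being
larger than the number of coloured neighbours. Finally `v₀v₁` only has to avoid the colour of
`v₁v₂`, since `v₁v` was coloured outside `A`, and `|A| = 2`.
-/

open Finset

theorem configGraphHalin_edgeSet :
    configGraphHalin.edgeSet = {s(0, 1), s(1, 2), s(2, 3), s(1, 4), s(2, 4)} := by
  rw [configGraphHalin, SimpleGraph.edgeSet_fromEdgeSet, sdiff_eq_left,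
    Set.disjoint_left]
  rintro e (rfl | rfl | rfl | rfl | rfl) <;> simp

theorem exists_isListEdgeColoring_configGraphHalin {L : Sym2 (Fin 5) → Finset ℕ}
    {c01 c12 c23 c14 c24 : ℕ}
    (h01 : c01 ∈ L s(0, 1)) (h12 : c12 ∈ L s(1, 2)) (h23 : c23 ∈ L s(2, 3))
    (h14 : c14 ∈ L s(1, 4)) (h24 : c24 ∈ L s(2, 4))
    (h01_12 : c01 ≠ c12) (h01_14 : c01 ≠ c14) (h12_23 : c12 ≠ c23) (h12_14 : c12 ≠ c14)
    (h12_24 : c12 ≠ c24) (h23_24 : c23 ≠ c24) (h14_24 : c14 ≠ c24) :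
    ∃ C, IsListEdgeColoring configGraphHalin L C := by
  refine ⟨fun e =>
    if e = s(0, 1) then c01 else if e = s(1, 2) then c12 else if e = s(2, 3) then c23 else
    if e = s(1, 4) then c14 else c24, ?_, ?_⟩
  · rw [configGraphHalin_edgeSet]
    rintro e (rfl | rfl | rfl | rfl | rfl) <;> simpa
  · rw [configGraphHalin_edgeSet]
    rintro e (rfl | rfl | rfl | rfl | rfl) f (rfl | rfl | rfl | rfl | rfl) hne ⟨v, hve, hvf⟩ <;>
      simp_all <;> omega

/-- The configuration arising in the proof that Halin graphs of maximum degree at least 4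
are `Δ`-edge-choosable: if `|L(v₁v₂)| ≥ 4`, `|L(v₁v)|, |L(v₂v)| ≥ 3` and
`|L(v₀v₁)|, |L(v₂v₃)| ≥ 2`, then the graph has an edge colouring from the lists. -/
theorem config_halin_list_edge_coloring (L : Sym2 (Fin 5) → Finset ℕ)
    (h12 : 4 ≤ (L s(1, 2)).card)
    (h1v : 3 ≤ (L s(1, 4)).card) (h2v : 3 ≤ (L s(2, 4)).card)
    (h01 : 2 ≤ (L s(0, 1)).card) (h23 : 2 ≤ (L s(2, 3)).card) :
    ∃ C, IsListEdgeColoring configGraphHalin L C := by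
  obtain ⟨A, hAL, hAcard⟩ := exists_subset_card_eq h01
  obtain ⟨c14, hc14, hc14A⟩ := exists_mem_notMem_of_card_lt_card
    (by omega : #A < #(L s(1, 4)))
  obtain ⟨c24, hc24, hc24_14⟩ := exists_mem_ne (by omega : 1 < #(L s(2, 4))) c14
  obtain ⟨c23, hc23, hc23_24⟩ := exists_mem_ne (by omega : 1 < #(L s(2, 3))) c24
  obtain ⟨c12, hc12, hc12_new⟩ := exists_mem_notMem_of_card_lt_card (s := {c14, c24, c23})
    (card_le_three.trans_lt h12)
  simp only [mem_insert, mem_singleton, not_or] at hc12_new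
  obtain ⟨hc12_14, hc12_24, hc12_23⟩ := hc12_new
  obtain ⟨c01, hc01A, hc01_12⟩ := exists_mem_ne (by omega : 1 < #A) c12
  exact exists_isListEdgeColoring_configGraphHalin (hAL hc01A) hc12 hc23 hc14 hc24 hc01_12
    (by rintro rfl; exact hc14A hc01A) hc12_23 hc12_14 hc12_24 hc23_24
    (Ne.symm hc24_14)
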